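/- For all n ≥ 0, γ_g(P′_n) = γ_g(P″_n) = ⌈n/2⌉ − 1 if n ≡ 3 (mod 4), and ⌈n/2⌉ otherwise. -/

import Mathlib

open Finset

namespace DomGame

open scoped Classical

noncomputable section

variable {V : Type*}

/-- The closed neighborhood of `x` in `G`, as a `Finset`. -/
def closedNbr (G : SimpleGraph V) [Fintype V] (x : V) : Finset V :=
  Finset.univ.filter (fun y => y = x ∨ G.Adj x y)

lemma card_compl_lt (G : SimpleGraph V) [Fintype V] {S : Finset V} {x : V}
    (h : ¬ closedNbr G x ⊆ S) :
    (Finset.univ \ (S ∪ closedNbr G x)).card < (Finset.univ \ S).card := by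
  obtain ⟨v, hvN, hvS⟩ := Finset.not_subset.mp h
  apply Finset.card_lt_card
  have hsub : Finset.univ \ (S ∪ closedNbr G x) ⊆ Finset.univ \ S := by
    intro y hy
    simp only [Finset.mem_sdiff, Finset.mem_univ, Finset.mem_union, true_and, not_or] at hy ⊢
    exact hy.1
  exact (Finset.ssubset_iff_of_subset hsub).mpr ⟨v, by simp [hvS], by simp [hvN]⟩

/-- The value of the (partially dominated) domination game on `G|S`, with
`dom = true` meaning Dominator moves next, `dom = false` meaning Staller moves next.
A legal move is a vertex whose closed neighborhood contains a yet undominated vertex;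
Dominator minimizes, Staller maximizes the total number of moves. -/
def gameVal (G : SimpleGraph V) [Fintype V] (dom : Bool) (S : Finset V) : ℕ :=
  let moves := Finset.univ.filter (fun x => ¬ closedNbr G x ⊆ S)
  if h : moves.Nonempty then
    if dom then
      moves.attach.inf' (by simpa using h)
        (fun x => 1 + gameVal G false (S ∪ closedNbr G x.1))
    else
      moves.attach.sup' (by simpa using h)
        (fun x => 1 + gameVal G true (S ∪ closedNbr G x.1))
  else 0
termination_by (Finset.univ \ S).card
decreasing_by
  · exact card_compl_lt G (by simpa using (Finset.mem_filter.mp x.2).2)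
  · exact card_compl_lt G (by simpa using (Finset.mem_filter.mp x.2).2)

/-- The D-game domination number `γ_g(G)`. -/
def gammaD (G : SimpleGraph V) [Fintype V] : ℕ := gameVal G true ∅

/-- The S-game domination number `γ_g'(G)`. -/
def gammaS (G : SimpleGraph V) [Fintype V] : ℕ := gameVal G false ∅

/-- Value of the Staller-pass domination game on `G|S`: Staller may skip
(at most) one move during the game; the skipped turn is not counted.
`dom` tells whose turn it is, `canPass` whether Staller's pass is still available. -/
def spVal (G : SimpleGraph V) [Fintype V] (dom : Bool) (canPass : Bool) (S : Finset V) : ℕ :=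
  let moves := Finset.univ.filter (fun x => ¬ closedNbr G x ⊆ S)
  if h : moves.Nonempty then
    if dom then
      moves.attach.inf' (by simpa using h)
        (fun x => 1 + spVal G false canPass (S ∪ closedNbr G x.1))
    else
      if hc : canPass then
        max (moves.attach.sup' (by simpa using h)
              (fun x => 1 + spVal G true canPass (S ∪ closedNbr G x.1)))
            (spVal G true false S)
      else
        moves.attach.sup' (by simpa using h)
          (fun x => 1 + spVal G true canPass (S ∪ closedNbr G x.1))
  else 0
termination_by ((Finset.univ \ S).card, if canPass then 1 else 0)
decreasing_by
  · exact Prod.Lex.left _ _ (card_compl_lt G (by simpa using (Finset.mem_filter.mp x.2).2))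
  · exact Prod.Lex.left _ _ (card_compl_lt G (by simpa using (Finset.mem_filter.mp x.2).2))
  · simp only [hc, if_true]
    exact Prod.Lex.right _ (by norm_num)
  · exact Prod.Lex.left _ _ (card_compl_lt G (by simpa using (Finset.mem_filter.mp x.2).2))

/-- Value of the Dominator-pass domination game on `G|S`: Dominator may skip
(at most) one move during the game; the skipped turn is not counted. -/
def dpVal (G : SimpleGraph V) [Fintype V] (dom : Bool) (canPass : Bool) (S : Finset V) : ℕ :=
  let moves := Finset.univ.filter (fun x => ¬ closedNbr G x ⊆ S)
  if h : moves.Nonempty then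
    if dom then
      if hc : canPass then
        min (moves.attach.inf' (by simpa using h)
              (fun x => 1 + dpVal G false canPass (S ∪ closedNbr G x.1)))
            (dpVal G false false S)
      else
        moves.attach.inf' (by simpa using h)
          (fun x => 1 + dpVal G false canPass (S ∪ closedNbr G x.1))
    else
      moves.attach.sup' (by simpa using h)
        (fun x => 1 + dpVal G true canPass (S ∪ closedNbr G x.1))
  else 0
termination_by ((Finset.univ \ S).card, if canPass then 1 else 0)
decreasing_by
  · exact Prod.Lex.left _ _ (card_compl_lt G (by simpa using (Finset.mem_filter.mp x.2).2))
  · simp only [hc, if_true]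
    exact Prod.Lex.right _ (by norm_num)
  · exact Prod.Lex.left _ _ (card_compl_lt G (by simpa using (Finset.mem_filter.mp x.2).2))
  · exact Prod.Lex.left _ _ (card_compl_lt G (by simpa using (Finset.mem_filter.mp x.2).2))

/-- The graph `G_{uv}`: obtained from `G - uv` by adding two new vertices
`u' = Sum.inr false` and `v' = Sum.inr true` together with the edges `u v'` and `v u'`. -/
def cutGraph (G : SimpleGraph V) (u v : V) : SimpleGraph (V ⊕ Bool) :=
  SimpleGraph.fromRel (fun x y =>
    match x, y with
    | Sum.inl a, Sum.inl b => G.Adj a b ∧ ¬ (a = u ∧ b = v) ∧ ¬ (a = v ∧ b = u)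
    | Sum.inl a, Sum.inr b => (b = false ∧ a = v) ∨ (b = true ∧ a = u)
    | _, _ => False)

/-- The set of vertices of `G_{uv}` declared dominated, given that `B ⊆ V(G)` is
declared dominated: `B` together with the two new vertices `u'` and `v'`. -/
def cutDom [DecidableEq V] (B : Finset V) : Finset (V ⊕ Bool) :=
  B.image Sum.inl ∪ {Sum.inr false, Sum.inr true}

/-- Disjoint union of two simple graphs. -/
def disjUnion {α β : Type*} (G : SimpleGraph α) (H : SimpleGraph β) :
    SimpleGraph (α ⊕ β) :=
  SimpleGraph.fromRel (fun x y =>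
    match x, y with
    | Sum.inl a, Sum.inl b => G.Adj a b
    | Sum.inr a, Sum.inr b => H.Adj a b
    | _, _ => False)

/-- The disjoint union of `k` paths, the `i`-th on `size i` vertices
(consecutive vertices of each `Fin (size i)` being adjacent). -/
def sigmaPathGraph (k : ℕ) (size : Fin k → ℕ) :
    SimpleGraph (Σ i : Fin k, Fin (size i)) :=
  SimpleGraph.fromRel (fun x y => x.1 = y.1 ∧ x.2.val + 1 = y.2.val)

/-- Vertex set of the three-legged spider `T_{p,q,r}`:
the center together with three legs on `4p`, `4q` and `4r` vertices. -/
abbrev SpiderV (p q r : ℕ) := Unit ⊕ (Fin (4*p) ⊕ (Fin (4*q) ⊕ Fin (4*r)))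

/-- The three-legged spider `T_{p,q,r}`, obtained from paths `P_{4p+1}`, `P_{4q+1}`,
`P_{4r+1}` by identifying one end-vertex of each into the center. In each leg,
vertex `0` is adjacent to the center, and vertices `i`, `i+1` are adjacent. -/
def spider (p q r : ℕ) : SimpleGraph (SpiderV p q r) :=
  SimpleGraph.fromRel (fun x y =>
    match x, y with
    | Sum.inl _, Sum.inr (Sum.inl i) => i.val = 0
    | Sum.inl _, Sum.inr (Sum.inr (Sum.inl i)) => i.val = 0
    | Sum.inl _, Sum.inr (Sum.inr (Sum.inr i)) => i.val = 0
    | Sum.inr (Sum.inl i), Sum.inr (Sum.inl j) => i.val + 1 = j.val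
    | Sum.inr (Sum.inr (Sum.inl i)), Sum.inr (Sum.inr (Sum.inl j)) => i.val + 1 = j.val
    | Sum.inr (Sum.inr (Sum.inr i)), Sum.inr (Sum.inr (Sum.inr j)) => i.val + 1 = j.val
    | _, _ => False)

/-- The weight `w(P'_{4q+r}) = w(P''_{4q+r}) = 2q + c_r` with
`c_0 = 0`, `c_1 = 1`, `c_2 = 3/2`, `c_3 = 7/4`, as a function of `n = 4q + r`. -/
def pathWeight (n : ℕ) : ℚ :=
  2 * (n / 4 : ℕ) +
    (if n % 4 = 0 then 0 else if n % 4 = 1 then 1 else if n % 4 = 2 then 3/2 else 7/4)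


/-!
Weigh a maximal run of `k` undominated vertices of the path, bounded by dominated vertices or by an
end of the path, by `runWeight k = 2k + (0, 2, 2, 1)` according to `k mod 4`, and let the potential
`Q` of a position be the total weight of its runs. As long as the runs are separated by at least
three dominated vertices (which every move preserves), a move affects a single run, splitting it
into two shorter ones, and lowers `Q` by between 1 and 7. Moreover some run (of length `≡ 3 mod 4`,
or `≡ 2` when `Q ≡ 2 mod 4`, or any run when `4 ∣ Q`) can be shortened at its left end so that `Q`
drops by at least `4 + Q mod 4`, which is optimal for Dominator, or by at least 1 and at most
`Q mod 4` (at most 4 when `4 ∣ Q`), which is optimal for Staller. Induction on `Q` shows that the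
D-game then lasts `⌊Q/4⌋` moves and the S-game `⌈Q/4⌉`; for `P′_n` and `P″_n`, `Q = runWeight n`.
-/

section Game

variable [Fintype V] (G : SimpleGraph V)

lemma gameVal_eq_zero {S : Finset V} (h : ∀ x, closedNbr G x ⊆ S) (dom : Bool) :
    gameVal G dom S = 0 := by
  rw [gameVal, dif_neg]
  exact fun ⟨x, hx⟩ => (Finset.mem_filter.mp hx).2 (h x)

lemma gameVal_true_le {S : Finset V} {x : V} (hx : ¬ closedNbr G x ⊆ S) :
    gameVal G true S ≤ 1 + gameVal G false (S ∪ closedNbr G x) := by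
  rw [gameVal, dif_pos ⟨x, Finset.mem_filter.mpr ⟨Finset.mem_univ x, hx⟩⟩, if_pos rfl]
  exact Finset.inf'_le _ (Finset.mem_attach _ ⟨x, Finset.mem_filter.mpr ⟨Finset.mem_univ x, hx⟩⟩)

lemma le_gameVal_true {S : Finset V} {n : ℕ} (hS : ∃ x, ¬ closedNbr G x ⊆ S)
    (h : ∀ x, ¬ closedNbr G x ⊆ S → n ≤ 1 + gameVal G false (S ∪ closedNbr G x)) :
    n ≤ gameVal G true S := by
  obtain ⟨x, hx⟩ := hS
  rw [gameVal, dif_pos ⟨x, Finset.mem_filter.mpr ⟨Finset.mem_univ x, hx⟩⟩, if_pos rfl]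
  exact Finset.le_inf' _ _ fun y _ => h y.1 (Finset.mem_filter.mp y.2).2

lemma le_gameVal_false {S : Finset V} {x : V} (hx : ¬ closedNbr G x ⊆ S) :
    1 + gameVal G true (S ∪ closedNbr G x) ≤ gameVal G false S := by
  have hmem : x ∈ Finset.univ.filter fun y => ¬ closedNbr G y ⊆ S :=
    Finset.mem_filter.mpr ⟨Finset.mem_univ x, hx⟩
  conv_rhs => rw [gameVal, dif_pos ⟨x, hmem⟩, if_neg Bool.false_ne_true]
  exact Finset.le_sup'_of_le _ (Finset.mem_attach _ ⟨x, hmem⟩) le_rfl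

lemma gameVal_false_le {S : Finset V} {n : ℕ}
    (h : ∀ x, ¬ closedNbr G x ⊆ S → 1 + gameVal G true (S ∪ closedNbr G x) ≤ n) :
    gameVal G false S ≤ n := by
  by_cases hS : (Finset.univ.filter fun x => ¬ closedNbr G x ⊆ S).Nonempty
  · rw [gameVal, dif_pos hS, if_neg Bool.false_ne_true]
    exact Finset.sup'_le _ _ fun y _ => h y.1 (Finset.mem_filter.mp y.2).2
  · rw [gameVal, dif_neg hS]
    exact Nat.zero_le n

theorem gameVal_eq_of_potential (P : Finset V → Prop) (f : Finset V → ℕ)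
    (hstep : ∀ S x, P S → ¬ closedNbr G x ⊆ S →
      P (S ∪ closedNbr G x) ∧ f (S ∪ closedNbr G x) < f S ∧ f S ≤ f (S ∪ closedNbr G x) + 7)
    (hdom : ∀ S, P S → f S ≠ 0 →
      ∃ x, ¬ closedNbr G x ⊆ S ∧ 1 + (f (S ∪ closedNbr G x) + 3) / 4 = f S / 4)
    (hsta : ∀ S, P S → f S ≠ 0 →
      ∃ x, ¬ closedNbr G x ⊆ S ∧ 1 + f (S ∪ closedNbr G x) / 4 = (f S + 3) / 4)
    {S : Finset V} (hS : P S) :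
    gameVal G true S = f S / 4 ∧ gameVal G false S = (f S + 3) / 4 := by
  induction hf : f S using Nat.strong_induction_on generalizing S with
  | _ N ih =>
  subst hf
  by_cases h0 : f S = 0
  · have hend : ∀ x, closedNbr G x ⊆ S := fun x => by
      by_contra hx
      exact absurd (hstep S x hS hx).2.1 (by omega)
    simp [gameVal_eq_zero G hend, h0]
  have child : ∀ x, ¬ closedNbr G x ⊆ S →
      gameVal G true (S ∪ closedNbr G x) = f (S ∪ closedNbr G x) / 4 ∧
      gameVal G false (S ∪ closedNbr G x) = (f (S ∪ closedNbr G x) + 3) / 4 ∧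
      f (S ∪ closedNbr G x) < f S ∧ f S ≤ f (S ∪ closedNbr G x) + 7 := fun x hx =>
    have ⟨hP, hlt, hle⟩ := hstep S x hS hx
    ⟨(ih _ hlt hP rfl).1, (ih _ hlt hP rfl).2, hlt, hle⟩
  obtain ⟨xd, hxd, hd⟩ := hdom S hS h0
  obtain ⟨xs, hxs, hs⟩ := hsta S hS h0
  constructor
  · refine le_antisymm ?_ (le_gameVal_true G ⟨xd, hxd⟩ fun x hx => ?_)
    · obtain ⟨-, hval, -⟩ := child xd hxd
      have := gameVal_true_le G hxd
      omega
    · obtain ⟨-, hval, -, hle⟩ := child x hx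
      omega
  · refine le_antisymm (gameVal_false_le G fun x hx => ?_) ?_
    · obtain ⟨hval, -, hlt, -⟩ := child x hx
      omega
    · obtain ⟨hval, -⟩ := child xs hxs
      have := le_gameVal_false G hxs
      omega

end Game

-- `runWeight k = 4 * pathWeight k`, the weight of a run being that of `P′_k` (or `P″_k`).
def runWeight (k : ℕ) : ℕ := 2 * k + if k % 4 = 0 then 0 else if k % 4 = 3 then 1 else 2

lemma runWeight_cases (k : ℕ) :
    k % 4 = 0 ∧ runWeight k = 2 * k ∨ k % 4 = 1 ∧ runWeight k = 2 * k + 2 ∨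
      k % 4 = 2 ∧ runWeight k = 2 * k + 2 ∨ k % 4 = 3 ∧ runWeight k = 2 * k + 1 := by
  unfold runWeight
  split_ifs <;> omega

lemma runWeight_strictMono : StrictMono runWeight :=
  strictMono_nat_of_lt_succ fun k => by
    rcases runWeight_cases k with h | h | h | h <;>
    rcases runWeight_cases (k + 1) with h' | h' | h' | h' <;> omega

@[simp] lemma runWeight_zero : runWeight 0 = 0 := rfl

lemma runWeight_split {k c : ℕ} (hk : 1 ≤ k) (hc : c ≤ k + 1) :
    runWeight (c - 2) + runWeight (k - (c + 1)) < runWeight k ∧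
      runWeight k ≤ runWeight (c - 2) + runWeight (k - (c + 1)) + 7 := by
  rcases runWeight_cases k with h | h | h | h <;>
  rcases runWeight_cases (c - 2) with h' | h' | h' | h' <;>
  rcases runWeight_cases (k - (c + 1)) with h'' | h'' | h'' | h'' <;> omega

def DecisiveRun (Q k : ℕ) : Prop := k % 4 = 3 ∨ k % 4 = 2 ∧ Q % 4 = 2 ∨ Q % 4 = 0

lemma DecisiveRun.dominator {Q k : ℕ} (h : DecisiveRun Q k) (hk : 1 ≤ k) (hQ : runWeight k ≤ Q) :
    ∃ j, 1 ≤ j ∧ j ≤ 3 ∧ j ≤ k ∧ 1 + (Q + runWeight (k - j) - runWeight k + 3) / 4 = Q / 4 := by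
  unfold DecisiveRun at h
  rcases runWeight_cases k with h' | h' | h' | h'
  · exact ⟨3, by rcases runWeight_cases (k - 3) with h'' | h'' | h'' | h'' <;> omega⟩
  · exact ⟨1, by rcases runWeight_cases (k - 1) with h'' | h'' | h'' | h'' <;> omega⟩
  · exact ⟨2, by rcases runWeight_cases (k - 2) with h'' | h'' | h'' | h'' <;> omega⟩
  · exact ⟨3, by rcases runWeight_cases (k - 3) with h'' | h'' | h'' | h'' <;> omega⟩

lemma DecisiveRun.staller {Q k : ℕ} (h : DecisiveRun Q k) (hk : 1 ≤ k) (hQ : runWeight k ≤ Q) :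
    1 + (Q + runWeight (k - 1) - runWeight k) / 4 = (Q + 3) / 4 := by
  unfold DecisiveRun at h
  rcases runWeight_cases k with h' | h' | h' | h' <;>
  rcases runWeight_cases (k - 1) with h'' | h'' | h'' | h'' <;> omega

lemma decisiveRun_add {Q k k' : ℕ} (h : DecisiveRun Q k') :
    DecisiveRun (runWeight k + Q) k ∨ DecisiveRun (runWeight k + Q) k' := by
  unfold DecisiveRun at *
  rcases runWeight_cases k with h' | h' | h' | h' <;> omega

lemma decisiveRun_runWeight (k : ℕ) :
    DecisiveRun (runWeight k) k := by
  unfold DecisiveRun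
  rcases runWeight_cases k with h' | h' | h' | h' <;> omega

lemma runWeight_div_four (n : ℕ) :
    runWeight n / 4 = if n % 4 = 3 then (n + 1) / 2 - 1 else (n + 1) / 2 := by
  rcases runWeight_cases n with h | h | h | h <;> simp [h] <;> omega

open List

-- `dominate c` marks the closed neighbourhood of vertex `c - 1`, that is positions `c - 2`, `c - 1`
-- and `c`; `dominate 0` marks position `0` alone.
def dominate : ℕ → List Bool → List Bool
  | _, [] => []
  | 0, _ :: l => true :: l
  | c + 1, b :: l => (b || decide (c ≤ 1)) :: dominate c l

@[simp] lemma dominate_nil (c : ℕ) : dominate c [] = [] := by cases c <;> rfl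

@[simp] lemma length_dominate (c : ℕ) (l : List Bool) : (dominate c l).length = l.length := by
  induction l generalizing c with
  | nil => simp
  | cons b l ih => cases c <;> simp [dominate, ih]

lemma getElem_dominate (c : ℕ) (l : List Bool) (j : ℕ) (h : j < (dominate c l).length) :
    (dominate c l)[j] = (l[j]'(by simpa using h) || decide (j ≤ c ∧ c ≤ j + 2)) := by
  induction l generalizing c j with
  | nil => simp at h
  | cons b l ih =>
    cases c <;> cases j <;> simp [dominate, ih]

lemma dominate_eq_self {c : ℕ} {l : List Bool} (h : false ∉ l.take (c + 1)) : dominate c l = l := by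
  induction l generalizing c with
  | nil => simp
  | cons b l ih =>
    cases c with
    | zero => cases b <;> simp_all [dominate]
    | succ c => cases b <;> simp_all [dominate, take_succ_cons]

lemma dominate_of_length_add_two_le {c : ℕ} {l : List Bool} (h : l.length + 2 ≤ c) :
    dominate c l = l :=
  ext_getElem (by simp) fun j _ _ => by simp [getElem_dominate]; omega

lemma dominate_append {c : ℕ} {l₁ : List Bool} (l₂ : List Bool) (h : l₁.length ≤ c) :
    dominate c (l₁ ++ l₂) = dominate c l₁ ++ dominate (c - l₁.length) l₂ := by
  induction l₁ generalizing c with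
  | nil => simp
  | cons b l₁ ih =>
    obtain ⟨c, rfl⟩ : ∃ c', c = c' + 1 := ⟨c - 1, by simp at h; omega⟩
    simp only [cons_append, dominate, ih (by simp at h; omega), length_cons]
    simp

lemma getElem_eq_true_of_false_not_mem_take {l : List Bool} {n i : ℕ} (h : false ∉ l.take n)
    (hi : i < n) (hil : i < l.length) : l[i] = true := by
  by_contra hf
  exact h (mem_iff_getElem.mpr ⟨i, by simp; omega, by simpa using hf⟩)

lemma dominate_replicate_false_append {c k : ℕ} {l : List Bool} (hk : 1 ≤ k) (hc : c ≤ k + 1)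
    (hl : false ∉ l.take 2) :
    dominate c (replicate k false ++ l) =
      replicate (c - 2) false ++ replicate (min (c + 1) k - (c - 2)) true ++
        replicate (k - (c + 1)) false ++ l := by
  apply ext_getElem
  · simp; omega
  · intro j _ _
    rw [getElem_dominate]
    simp only [getElem_append, getElem_replicate, length_append, length_replicate]
    split_ifs <;> try (simp; omega)
    simp only [show c - 2 + (min (c + 1) k - (c - 2)) + (k - (c + 1)) = k by omega]
    by_cases hj : j ≤ c ∧ c ≤ j + 2
    · simp [getElem_eq_true_of_false_not_mem_take hl (i := j - k) (by omega)]
    · simp_all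

lemma dominate_replicate_true_append_of_lt {c s : ℕ} (hc : c < s) (l : List Bool) :
    dominate c (replicate s true ++ l) = replicate s true ++ l :=
  dominate_eq_self (by simp [take_append, take_replicate, show c + 1 - s = 0 by omega])

lemma dominate_replicate_true_append {c s : ℕ} (hc : s ≤ c) (l : List Bool) :
    dominate c (replicate s true ++ l) = replicate s true ++ dominate (c - s) l := by
  rw [dominate_append _ (by simpa using hc), dominate_eq_self (by simp [take_replicate]),
    length_replicate]

lemma dominate_replicate_false_append_of_le {c k : ℕ} (hc : k + 2 ≤ c) (l : List Bool) :
    dominate c (replicate k false ++ l) = replicate k false ++ dominate (c - k) l := by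
  rw [dominate_append _ (by simp; omega), dominate_of_length_add_two_le (by simpa using hc),
    length_replicate]

lemma dominate_shorten_run {s k j : ℕ} {l : List Bool} (hj : 1 ≤ j) (hj3 : j ≤ 3)
    (hjk : j ≤ k) (hl : false ∉ l.take 2) :
    dominate (s + j - 1) (replicate s true ++ replicate k false ++ l) =
      replicate (s + j) true ++ replicate (k - j) false ++ l := by
  rw [append_assoc, dominate_replicate_true_append (by omega),
    dominate_replicate_false_append (by omega) (by omega) hl, show s + j - 1 - s - 2 = 0 by omega,
    show min (s + j - 1 - s + 1) k - 0 = j by omega, show k - (s + j - 1 - s + 1) = k - j by omega,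
    replicate_add]
  simp only [replicate_zero, nil_append, append_assoc]

lemma dominate_beyond_run {s k c : ℕ} (hc : 2 ≤ c) (l : List Bool) :
    dominate (s + k + c) (replicate s true ++ replicate k false ++ l) =
      replicate s true ++ replicate k false ++ dominate c l := by
  rw [append_assoc, dominate_replicate_true_append (by omega),
    dominate_replicate_false_append_of_le (by omega)]
  simp [show s + k + c - s - k = c by omega]

-- `potentialFrom k l = potential (replicate k false ++ l)`.
def potentialFrom : ℕ → List Bool → ℕ
  | k, [] => runWeight k
  | k, true :: l => runWeight k + potentialFrom 0 l
  | k, false :: l => potentialFrom (k + 1) l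

def potential (l : List Bool) : ℕ := potentialFrom 0 l

@[simp] lemma potential_nil : potential [] = 0 := rfl

lemma potentialFrom_replicate_false_append (k j : ℕ) (l : List Bool) :
    potentialFrom k (replicate j false ++ l) = potentialFrom (k + j) l := by
  induction j generalizing k with
  | zero => rfl
  | succ j ih => rw [replicate_succ, cons_append, potentialFrom, ih]; ring_nf

@[simp] lemma potential_replicate_true_append (s : ℕ) (l : List Bool) :
    potential (replicate s true ++ l) = potential l := by
  induction s with
  | zero => rfl
  | succ s ih => simpa [potential, potentialFrom, replicate_succ] using ih

lemma potential_replicate_false_append (k : ℕ) {l : List Bool} (hl : false ∉ l.take 1) :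
    potential (replicate k false ++ l) = runWeight k + potential l := by
  rw [potential, potentialFrom_replicate_false_append, zero_add]
  match l, hl with
  | [], _ => rfl
  | true :: l, _ => simp [potential, potentialFrom]
  | false :: _, hl => simp at hl

@[simp] lemma potential_replicate_true (s : ℕ) : potential (replicate s true) = 0 := by
  simpa using potential_replicate_true_append s []

-- Runs of undominated entries separated by at least three dominated ones, after a first block
-- of at least `m` dominated entries; with `m = 1` every run is an independent copy of `P′_k` or
-- `P″_k`.
inductive Spaced : ℕ → List Bool → Prop
  | trues (m s : ℕ) : Spaced m (replicate s true)
  | run {m s k : ℕ} {l : List Bool} :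
      m ≤ s → 1 ≤ k → Spaced 3 l → Spaced m (replicate s true ++ replicate k false ++ l)

namespace Spaced

variable {m : ℕ} {l : List Bool}

lemma mono (h : Spaced m l) {m' : ℕ} (hm : m' ≤ m) : Spaced m' l := by
  cases h with
  | trues => exact trues m' _
  | run hs hk hl => exact run (hm.trans hs) hk hl

lemma replicate_true_append (h : Spaced m l) (s : ℕ) : Spaced (s + m) (replicate s true ++ l) := by
  cases h with
  | trues => rw [← replicate_add]; exact trues _ _
  | run hs hk hl =>
    rw [← append_assoc, ← append_assoc, ← replicate_add]
    exact run (by omega) hk hl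

lemma false_not_mem_take (h : Spaced m l) {n : ℕ} (hn : n ≤ m) : false ∉ l.take n := by
  cases h with
  | trues => simp [take_replicate]
  | @run _ s _ _ hs hk hl => simp [take_append, take_replicate, show n - s = 0 by omega]

lemma potential_run (h : Spaced 3 l) (s k : ℕ) :
    potential (replicate s true ++ replicate k false ++ l) = runWeight k + potential l := by
  rw [append_assoc, potential_replicate_true_append,
    potential_replicate_false_append k (h.false_not_mem_take (by omega))]

lemma run' {s : ℕ} (hs : m ≤ s) (hl : Spaced 3 l) (k : ℕ) :
    Spaced m (replicate s true ++ replicate k false ++ l) := by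
  rcases Nat.eq_zero_or_pos k with rfl | hk
  · simpa using (hl.replicate_true_append s).mono (by omega)
  · exact run hs hk hl

lemma split_run {s L M R : ℕ} (hs : m ≤ s) (hl : Spaced 3 l) (hM : 0 < L → 0 < R → 3 ≤ M) :
    Spaced m
      (replicate s true ++ replicate L false ++ replicate M true ++ replicate R false ++ l) := by
  rcases Nat.eq_zero_or_pos L with rfl | hL
  · simpa [← append_assoc, ← replicate_add] using run' (s := s + M) (by omega) hl R
  · have hrest : Spaced 3 (replicate M true ++ replicate R false ++ l) := by
      rcases Nat.eq_zero_or_pos R with rfl | hR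
      · simpa using (hl.replicate_true_append M).mono (by omega)
      · exact run (hM hL hR) hR hl
    simpa [append_assoc] using run hs hL hrest

theorem dominate_eq_self_or (h : Spaced m l) (c : ℕ) :
    dominate c l = l ∨ Spaced m (dominate c l) ∧
      potential (dominate c l) < potential l ∧ potential l ≤ potential (dominate c l) + 7 := by
  induction h generalizing c with
  | trues => exact Or.inl (dominate_eq_self (by simp [take_replicate]))
  | @run m s k l hs hk hl ih =>
    rw [hl.potential_run]
    rcases Nat.lt_or_ge c s with hcs | hcs
    · exact Or.inl (by rw [append_assoc, dominate_replicate_true_append_of_lt hcs])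
    rcases Nat.lt_or_ge (c - s) (k + 2) with hck | hck
    · right
      rw [append_assoc, dominate_replicate_true_append hcs,
        dominate_replicate_false_append hk (by omega) (hl.false_not_mem_take (by omega))]
      have hdrop := runWeight_split hk (show c - s ≤ k + 1 by omega)
      set L := c - s - 2
      set M := min (c - s + 1) k - L
      set R := k - (c - s + 1)
      have hM : 1 ≤ M := by omega
      refine ⟨by simpa only [append_assoc] using split_run (L := L) (M := M) hs hl (by omega), ?_⟩
      simp only [append_assoc, potential_replicate_true_append]
      rw [potential_replicate_false_append _ (by simp [take_append, take_replicate, hM]),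
        potential_replicate_true_append,
        potential_replicate_false_append _ (hl.false_not_mem_take (by omega))]
      omega
    · obtain ⟨c, rfl⟩ : ∃ c', c = s + k + c' := ⟨c - s - k, by omega⟩
      rw [dominate_beyond_run (by omega)]
      rcases ih c with hl' | ⟨hl', hlt, hle⟩
      · exact Or.inl (by rw [hl'])
      · exact Or.inr ⟨run hs hk hl', by rw [hl'.potential_run]; omega⟩

theorem exists_decisiveRun (h : Spaced m l) (h0 : potential l ≠ 0) :
    ∃ k, 1 ≤ k ∧ runWeight k ≤ potential l ∧ DecisiveRun (potential l) k ∧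
      ∀ j, 1 ≤ j → j ≤ 3 → j ≤ k → ∃ c, m ≤ c ∧ c ≤ l.length ∧
        potential (dominate c l) + runWeight k = runWeight (k - j) + potential l := by
  induction h with
  | trues => simp at h0
  | @run m s k l hs hk hl ih =>
    rw [hl.potential_run]
    have first : ∀ j, 1 ≤ j → j ≤ 3 → j ≤ k → ∃ c, m ≤ c ∧
        c ≤ (replicate s true ++ replicate k false ++ l).length ∧
        potential (dominate c (replicate s true ++ replicate k false ++ l)) + runWeight k =
          runWeight (k - j) + (runWeight k + potential l) := fun j hj hj3 hjk =>
      ⟨s + j - 1, by omega, by simp; omega, by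
        rw [dominate_shorten_run hj hj3 hjk (hl.false_not_mem_take (by omega)), hl.potential_run]
        ring⟩
    by_cases hdec : DecisiveRun (runWeight k + potential l) k
    · exact ⟨k, hk, by omega, hdec, first⟩
    have hl0 : potential l ≠ 0 := fun h => hdec (by simpa [h] using decisiveRun_runWeight k)
    obtain ⟨k', hk', hle, hdec', hmoves⟩ := ih hl0
    refine ⟨k', hk', by omega, (decisiveRun_add hdec').resolve_left hdec, fun j hj hj3 hjk => ?_⟩
    obtain ⟨c, hc, hcl, hpot⟩ := hmoves j hj hj3 hjk
    have hsp : Spaced 3 (dominate c l) :=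
      (hl.dominate_eq_self_or c).elim (fun h => by rwa [h]) And.left
    refine ⟨s + k + c, by omega, by simp; omega, ?_⟩
    rw [dominate_beyond_run (by omega), hsp.potential_run]
    omega

theorem exists_decisive_moves (h : Spaced 1 l) (h0 : potential l ≠ 0) :
    (∃ c, 1 ≤ c ∧ c ≤ l.length ∧ potential (dominate c l) < potential l ∧
        1 + (potential (dominate c l) + 3) / 4 = potential l / 4) ∧
      ∃ c, 1 ≤ c ∧ c ≤ l.length ∧ potential (dominate c l) < potential l ∧
        1 + potential (dominate c l) / 4 = (potential l + 3) / 4 := by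
  obtain ⟨k, hk, hle, hdec, hmoves⟩ := h.exists_decisiveRun h0
  obtain ⟨j, hj, hj3, hjk, hdom⟩ := hdec.dominator hk hle
  obtain ⟨c, hc, hcl, hpot⟩ := hmoves j hj hj3 hjk
  obtain ⟨c', hc', hcl', hpot'⟩ := hmoves 1 le_rfl (by omega) hk
  have hltj : runWeight (k - j) < runWeight k := runWeight_strictMono (by omega)
  have hlt1 : runWeight (k - 1) < runWeight k := runWeight_strictMono (by omega)
  refine ⟨⟨c, hc, hcl, by omega, ?_⟩, ⟨c', hc', hcl', by omega, ?_⟩⟩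
  · rwa [show potential (dominate c l) = potential l + runWeight (k - j) - runWeight k by omega]
  · rw [show potential (dominate c' l) = potential l + runWeight (k - 1) - runWeight k by omega]
    exact hdec.staller hk hle

end Spaced

def dominatedList {m : ℕ} (S : Finset (Fin m)) : List Bool := List.ofFn fun i => decide (i ∈ S)

@[simp] lemma length_dominatedList {m : ℕ} (S : Finset (Fin m)) : (dominatedList S).length = m := by
  simp [dominatedList]

lemma dominatedList_injective {m : ℕ} : Function.Injective (dominatedList (m := m)) := by
  intro S T h
  ext i
  simpa [dominatedList] using congrFun (List.ofFn_inj.mp h) i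

lemma mem_closedNbr_pathGraph {m : ℕ} {x y : Fin m} :
    y ∈ closedNbr (SimpleGraph.pathGraph m) x ↔ y.val ≤ x.val + 1 ∧ x.val ≤ y.val + 1 := by
  simp only [closedNbr, Finset.mem_filter, Finset.mem_univ, true_and, SimpleGraph.pathGraph_adj,
    Fin.ext_iff]
  omega

-- Any `DecidableEq` instance, since `gameVal` forms its unions with the classical one.
lemma dominatedList_union_closedNbr {m : ℕ} [DecidableEq (Fin m)] (S : Finset (Fin m))
    (x : Fin m) :
    dominatedList (S ∪ closedNbr (SimpleGraph.pathGraph m) x) =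
      dominate (x + 1) (dominatedList S) := by
  refine ext_getElem (by simp) fun j _ _ => ?_
  simp [dominatedList, getElem_dominate, mem_closedNbr_pathGraph]
  congr

lemma exists_legal_of_dominate_ne {m c : ℕ} {S : Finset (Fin m)} (hc : 1 ≤ c) (hcm : c ≤ m)
    (hne : dominate c (dominatedList S) ≠ dominatedList S) :
    ∃ x : Fin m, ¬ closedNbr (SimpleGraph.pathGraph m) x ⊆ S ∧ x.val + 1 = c := by
  refine ⟨⟨c - 1, by omega⟩, fun hsub => hne ?_, by simp; omega⟩
  rw [show c = c - 1 + 1 by omega, ← Fin.val_mk (show c - 1 < m by omega),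
    ← dominatedList_union_closedNbr, Finset.union_eq_left.mpr hsub]

theorem gameVal_pathGraph {m : ℕ} {S : Finset (Fin m)} (hS : Spaced 1 (dominatedList S)) :
    gameVal (SimpleGraph.pathGraph m) true S = potential (dominatedList S) / 4 ∧
      gameVal (SimpleGraph.pathGraph m) false S = (potential (dominatedList S) + 3) / 4 := by
  refine gameVal_eq_of_potential _ (fun S => Spaced 1 (dominatedList S))
    (fun S => potential (dominatedList S)) ?_ ?_ ?_ hS
  · intro S x hS hx
    simp only [dominatedList_union_closedNbr]
    refine (hS.dominate_eq_self_or (x + 1)).resolve_left fun h => hx ?_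
    rw [← dominatedList_union_closedNbr] at h
    exact Finset.union_eq_left.mp (dominatedList_injective h)
  · intro S hS h0
    obtain ⟨⟨c, hc, hcm, hlt, hpot⟩, -⟩ := hS.exists_decisive_moves h0
    obtain ⟨x, hx, rfl⟩ := exists_legal_of_dominate_ne hc (by simpa using hcm)
      (ne_of_apply_ne potential hlt.ne)
    exact ⟨x, hx, by simpa only [dominatedList_union_closedNbr] using hpot⟩
  · intro S hS h0
    obtain ⟨-, ⟨c, hc, hcm, hlt, hpot⟩⟩ := hS.exists_decisive_moves h0
    obtain ⟨x, hx, rfl⟩ := exists_legal_of_dominate_ne hc (by simpa using hcm)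
      (ne_of_apply_ne potential hlt.ne)
    exact ⟨x, hx, by simpa only [dominatedList_union_closedNbr] using hpot⟩

lemma dominatedList_eq_of_mem_iff {m n : ℕ} (hn : n < m) {S : Finset (Fin m)}
    (hS : ∀ i : Fin m, i ∈ S ↔ i.val = 0 ∨ n < i.val) :
    dominatedList S = replicate 1 true ++ replicate n false ++ replicate (m - (n + 1)) true := by
  refine ext_getElem (by simp; omega) fun j hj _ => ?_
  rw [length_dominatedList] at hj
  simp only [dominatedList, List.getElem_ofFn, hS, getElem_append, getElem_replicate,
    length_append, length_replicate]
  split_ifs <;> simp <;> omega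

lemma gameVal_pathGraph_of_mem_iff {m n : ℕ} (hn : n < m) {S : Finset (Fin m)}
    (hS : ∀ i : Fin m, i ∈ S ↔ i.val = 0 ∨ n < i.val) :
    gameVal (SimpleGraph.pathGraph m) true S = runWeight n / 4 := by
  have hl := dominatedList_eq_of_mem_iff hn hS
  have hsp : Spaced 1 (dominatedList S) := hl ▸ Spaced.run' le_rfl (Spaced.trues 3 _) n
  rw [(gameVal_pathGraph hsp).1, hl, (Spaced.trues 3 _).potential_run, potential_replicate_true,
    add_zero]

/-- Here `P′_n` is the path on `n+1` vertices with end-vertex `0` dominated, and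
`P″_n` is the path on `n+2` vertices with both end-vertices dominated. -/
theorem gammaD_paths (n : ℕ) :
    gameVal (SimpleGraph.pathGraph (n+1)) true ({0} : Finset (Fin (n+1)))
      = (if n % 4 = 3 then (n+1)/2 - 1 else (n+1)/2) ∧
    gameVal (SimpleGraph.pathGraph (n+2)) true ({0, Fin.last (n+1)} : Finset (Fin (n+2)))
      = (if n % 4 = 3 then (n+1)/2 - 1 else (n+1)/2) := by
  rw [← runWeight_div_four]
  refine ⟨gameVal_pathGraph_of_mem_iff (by omega) fun i => ?_,
    gameVal_pathGraph_of_mem_iff (by omega) fun i => ?_⟩ <;>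
  · simp only [Finset.mem_insert, Finset.mem_singleton, Fin.ext_iff, Fin.val_zero, Fin.val_last]
    omega

end

end DomGame
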